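/- Let (Y_n)_{n≥-2} be i.i.d. uniform on [0,1], Z_{n,1} = max{Y_n, Y_{n-2}, Y_{n-3}}, Z_{n,2} = Y_n, u_{n,j} = 1 − τ'_j/n, τ'_j > 0. Writing A_{1,n}^{(1)} = {Z_{1,1} ≤ u_{n,1} < Z_{2,1}} and A_{1,n}^{(2)} = {Z_{1,2} ≤ u_{n,2} < Z_{2,2}}, the limit of n·P(A_{1,n}^{(1)} ∩ (A_{1,n}^{(2)})^c) as n → ∞ equals τ'_1 if τ'_2 ≥ τ'_1 and equals 2τ'_1 − τ'_2 if τ'_2 < τ'_1; and the limit of n·P((A_{1,n}^{(1)})^c ∩ A_{1,n}^{(2)}) equals τ'_2 − τ'_1 if τ'_2 ≥ τ'_1 and 0 if τ'_2 < τ'_1. -/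

import Mathlib

/-!
Both upcrossings at time 1 are determined by `Y (-2), …, Y 2`. Splitting according to whether
`Y 2` exceeds the level of the lagged maximum, each of `A₁`, `A₂`, `A₁ ∩ A₂` is a union of at most
two disjoint boxes in these five coordinates, so independence gives, with `a = u₁ n`, `b = u₂ n`,
`P A₁ = a³ (1 - a²)`, `P A₂ = b (1 - b)` and
`P (A₁ ∩ A₂) = a² min(a, b) ((1 - max(a, b)) + (1 - a) (a - b)⁺)`.
Since `n (1 - a) = τ'₁` and `n (1 - b) = τ'₂`, the rescaled probabilities tend to `2τ'₁`, `τ'₂` and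
`min τ'₁ τ'₂`, and the two limits are `2τ'₁ - min τ'₁ τ'₂` and `τ'₂ - min τ'₁ τ'₂`.
-/

open MeasureTheory ProbabilityTheory Filter Set Topology

section Events

variable {Ω : Type*}

def upcrossing (X : ℤ → Ω → ℝ) (a : ℝ) : Set Ω := {ω | X 1 ω ≤ a ∧ a < X 2 ω}

def laggedMax (Y : ℤ → Ω → ℝ) (i : ℤ) (ω : Ω) : ℝ := max (Y i ω) (max (Y (i - 2) ω) (Y (i - 3) ω))

def boxEvent (Y : ℤ → Ω → ℝ) (s₀ s₁ s₂ s₃ s₄ : Set ℝ) : Set Ω :=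
  Y (-2) ⁻¹' s₀ ∩ Y (-1) ⁻¹' s₁ ∩ Y 0 ⁻¹' s₂ ∩ Y 1 ⁻¹' s₃ ∩ Y 2 ⁻¹' s₄

variable {Y : ℤ → Ω → ℝ}

lemma laggedMax_one (ω : Ω) : laggedMax Y 1 ω = max (Y 1 ω) (max (Y (-1) ω) (Y (-2) ω)) := by
  norm_num [laggedMax]

lemma laggedMax_two (ω : Ω) : laggedMax Y 2 ω = max (Y 2 ω) (max (Y 0 ω) (Y (-1) ω)) := by
  norm_num [laggedMax]

lemma upcrossing_eq_boxEvent (b : ℝ) :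
    upcrossing Y b = boxEvent Y univ univ univ (Iic b) (Ioi b) := by
  ext ω
  simp [upcrossing, boxEvent]

lemma upcrossing_laggedMax_eq_union (a : ℝ) :
    upcrossing (laggedMax Y) a =
      boxEvent Y (Iic a) (Iic a) univ (Iic a) (Ioi a) ∪
        boxEvent Y (Iic a) (Iic a) (Ioi a) (Iic a) (Iic a) := by
  ext ω
  simp only [upcrossing, boxEvent, laggedMax_one, laggedMax_two, mem_ofPred_eq, mem_union,
    mem_inter_iff, mem_preimage, mem_Iic, mem_Ioi, mem_univ, max_le_iff, lt_max_iff]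
  -- given `Y (-1) ≤ a`, the upcrossing happens through `Y 2`, or else through `Y 0` with `Y 2 ≤ a`
  grind

lemma upcrossing_laggedMax_inter_upcrossing_eq_union (a b : ℝ) :
    upcrossing (laggedMax Y) a ∩ upcrossing Y b =
      boxEvent Y (Iic a) (Iic a) univ (Iic (min a b)) (Ioi (max a b)) ∪
        boxEvent Y (Iic a) (Iic a) (Ioi a) (Iic (min a b)) (Ioc b a) := by
  ext ω
  simp only [upcrossing, boxEvent, laggedMax_one, laggedMax_two, mem_ofPred_eq, mem_union,
    mem_inter_iff, mem_preimage, mem_Iic, mem_Ioi, mem_Ioc, mem_univ, max_le_iff, lt_max_iff,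
    le_min_iff, max_lt_iff]
  grind

end Events

section UnitInterval

variable {a b : ℝ}

lemma volume_restrict_unitInterval_real_Iic (h₀ : 0 ≤ a) (h₁ : a ≤ 1) :
    (volume.restrict (Icc (0:ℝ) 1)).real (Iic a) = a := by
  have : Iic a ∩ Icc 0 1 = Icc 0 a := by
    ext x
    simp only [mem_inter_iff, mem_Iic, mem_Icc]
    grind
  rw [measureReal_restrict_apply measurableSet_Iic, this, Real.volume_real_Icc_of_le h₀, sub_zero]

lemma volume_restrict_unitInterval_real_Ioi (h₀ : 0 ≤ a) (h₁ : a ≤ 1) :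
    (volume.restrict (Icc (0:ℝ) 1)).real (Ioi a) = 1 - a := by
  have : Ioi a ∩ Icc 0 1 = Ioc a 1 := by
    ext x
    simp only [mem_inter_iff, mem_Ioi, mem_Icc, mem_Ioc]
    grind
  rw [measureReal_restrict_apply measurableSet_Ioi, this, Real.volume_real_Ioc_of_le h₁]

lemma volume_restrict_unitInterval_real_Ioc (h₀ : 0 ≤ a) (h₁ : b ≤ 1) :
    (volume.restrict (Icc (0:ℝ) 1)).real (Ioc a b) = max (b - a) 0 := by
  rw [measureReal_restrict_apply measurableSet_Ioc,
    inter_eq_left.2 (Ioc_subset_Icc_self.trans (Icc_subset_Icc h₀ h₁)), Real.volume_real_Ioc]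

end UnitInterval

lemma MeasureTheory.measureReal_inter_compl_eq_sub {Ω : Type*} [MeasurableSpace Ω] {μ : Measure Ω}
    [IsFiniteMeasure μ] {s t : Set Ω} (ht : MeasurableSet t) :
    μ.real (s ∩ tᶜ) = μ.real s - μ.real (s ∩ t) := by
  rw [← sdiff_eq]
  exact eq_sub_of_add_eq (measureReal_sdiff_add_inter ht)

section IIDUniform

variable {Ω : Type*} [MeasurableSpace Ω] {P : Measure Ω} {Y : ℤ → Ω → ℝ}

lemma measurableSet_upcrossing {X : ℤ → Ω → ℝ} (hX : ∀ i, Measurable (X i)) (a : ℝ) :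
    MeasurableSet (upcrossing X a) :=
  (measurableSet_le (hX 1) measurable_const).inter (measurableSet_lt measurable_const (hX 2))

lemma measurable_laggedMax (hYm : ∀ i, Measurable (Y i)) (i : ℤ) :
    Measurable (laggedMax Y i) :=
  (hYm i).max ((hYm _).max (hYm _))

lemma measurableSet_boxEvent (hYm : ∀ i, Measurable (Y i)) {s₀ s₁ s₂ s₃ s₄ : Set ℝ}
    (h₀ : MeasurableSet s₀) (h₁ : MeasurableSet s₁) (h₂ : MeasurableSet s₂)
    (h₃ : MeasurableSet s₃) (h₄ : MeasurableSet s₄) :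
    MeasurableSet (boxEvent Y s₀ s₁ s₂ s₃ s₄) :=
  ((((hYm _ h₀).inter (hYm _ h₁)).inter (hYm _ h₂)).inter (hYm _ h₃)).inter (hYm _ h₄)

lemma ProbabilityTheory.iIndepFun.measureReal_iInter_preimage {ι : Type*} [Fintype ι] {k : ι → ℤ}
    (hIndep : iIndepFun Y P) (hk : k.Injective) {s : ι → Set ℝ}
    (hs : ∀ j, MeasurableSet (s j)) :
    P.real (⋂ j, Y (k j) ⁻¹' s j) = ∏ j, P.real (Y (k j) ⁻¹' s j) := by
  have := (hIndep.precomp hk).measure_inter_preimage_eq_mul Finset.univ (sets := s)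
    fun j _ => hs j
  simp only [Finset.mem_univ, iInter_true] at this
  simp only [measureReal_def, this, ENNReal.toReal_prod]

variable (hYm : ∀ i, Measurable (Y i)) (hIndep : iIndepFun Y P)
  (hUnif : ∀ i, Measure.map (Y i) P = volume.restrict (Icc (0:ℝ) 1))
include hYm hIndep hUnif

lemma measureReal_boxEvent {s₀ s₁ s₂ s₃ s₄ : Set ℝ}
    (h₀ : MeasurableSet s₀) (h₁ : MeasurableSet s₁) (h₂ : MeasurableSet s₂)
    (h₃ : MeasurableSet s₃) (h₄ : MeasurableSet s₄) :
    P.real (boxEvent Y s₀ s₁ s₂ s₃ s₄) =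
      (volume.restrict (Icc (0:ℝ) 1)).real s₀ * (volume.restrict (Icc (0:ℝ) 1)).real s₁ *
        (volume.restrict (Icc (0:ℝ) 1)).real s₂ * (volume.restrict (Icc (0:ℝ) 1)).real s₃ *
          (volume.restrict (Icc (0:ℝ) 1)).real s₄ := by
  have hlaw : ∀ i s, MeasurableSet s →
      P.real (Y i ⁻¹' s) = (volume.restrict (Icc (0:ℝ) 1)).real s := fun i s hs => by
    rw [← hUnif i, map_measureReal_apply (hYm i) hs]
  have hbox : boxEvent Y s₀ s₁ s₂ s₃ s₄ =
      ⋂ j, Y (![-2, -1, 0, 1, 2] j) ⁻¹' ![s₀, s₁, s₂, s₃, s₄] j := by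
    ext ω
    simp [boxEvent, Fin.forall_fin_succ, and_assoc]
  rw [hbox, hIndep.measureReal_iInter_preimage (by decide) (by intro j; fin_cases j <;> assumption)]
  simp only [Fin.prod_univ_five, Matrix.cons_val_zero, Matrix.cons_val_one, Matrix.cons_val,
    hlaw _ _ h₀, hlaw _ _ h₁, hlaw _ _ h₂, hlaw _ _ h₃, hlaw _ _ h₄]

lemma measureReal_upcrossing {b : ℝ} (h₀ : 0 ≤ b) (h₁ : b ≤ 1) :
    P.real (upcrossing Y b) = b * (1 - b) := by
  rw [upcrossing_eq_boxEvent, measureReal_boxEvent hYm hIndep hUnif MeasurableSet.univ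
    MeasurableSet.univ MeasurableSet.univ measurableSet_Iic measurableSet_Ioi,
    volume_restrict_unitInterval_real_Iic h₀ h₁, volume_restrict_unitInterval_real_Ioi h₀ h₁,
    measureReal_restrict_apply_univ, Real.volume_real_Icc_of_le zero_le_one]
  ring

lemma measureReal_upcrossing_laggedMax [IsFiniteMeasure P] {a : ℝ} (h₀ : 0 ≤ a) (h₁ : a ≤ 1) :
    P.real (upcrossing (laggedMax Y) a) = a ^ 3 * (1 - a ^ 2) := by
  have hdisj : Disjoint (boxEvent Y (Iic a) (Iic a) univ (Iic a) (Ioi a))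
      (boxEvent Y (Iic a) (Iic a) (Ioi a) (Iic a) (Iic a)) :=
    disjoint_left.2 fun ω h h' => lt_irrefl a (h.2.trans_le h'.2)
  rw [upcrossing_laggedMax_eq_union, measureReal_union hdisj (measurableSet_boxEvent hYm
      measurableSet_Iic measurableSet_Iic measurableSet_Ioi measurableSet_Iic measurableSet_Iic),
    measureReal_boxEvent hYm hIndep hUnif measurableSet_Iic measurableSet_Iic
      MeasurableSet.univ measurableSet_Iic measurableSet_Ioi,
    measureReal_boxEvent hYm hIndep hUnif measurableSet_Iic measurableSet_Iic
      measurableSet_Ioi measurableSet_Iic measurableSet_Iic,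
    volume_restrict_unitInterval_real_Iic h₀ h₁, volume_restrict_unitInterval_real_Ioi h₀ h₁,
    measureReal_restrict_apply_univ, Real.volume_real_Icc_of_le zero_le_one]
  ring

lemma measureReal_upcrossing_laggedMax_inter_upcrossing [IsFiniteMeasure P] {a b : ℝ}
    (ha₀ : 0 ≤ a) (ha₁ : a ≤ 1) (hb₀ : 0 ≤ b) (hb₁ : b ≤ 1) :
    P.real (upcrossing (laggedMax Y) a ∩ upcrossing Y b) =
      a ^ 2 * min a b * ((1 - max a b) + (1 - a) * max (a - b) 0) := by
  have hdisj : Disjoint (boxEvent Y (Iic a) (Iic a) univ (Iic (min a b)) (Ioi (max a b)))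
      (boxEvent Y (Iic a) (Iic a) (Ioi a) (Iic (min a b)) (Ioc b a)) :=
    disjoint_left.2 fun ω h h' => lt_irrefl a (((le_max_left a b).trans_lt h.2).trans_le h'.2.2)
  rw [upcrossing_laggedMax_inter_upcrossing_eq_union, measureReal_union hdisj
      (measurableSet_boxEvent hYm measurableSet_Iic measurableSet_Iic measurableSet_Ioi
        measurableSet_Iic measurableSet_Ioc),
    measureReal_boxEvent hYm hIndep hUnif measurableSet_Iic measurableSet_Iic
      MeasurableSet.univ measurableSet_Iic measurableSet_Ioi,
    measureReal_boxEvent hYm hIndep hUnif measurableSet_Iic measurableSet_Iic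
      measurableSet_Ioi measurableSet_Iic measurableSet_Ioc,
    volume_restrict_unitInterval_real_Iic ha₀ ha₁,
    volume_restrict_unitInterval_real_Iic (le_min ha₀ hb₀) (min_le_of_left_le ha₁),
    volume_restrict_unitInterval_real_Ioi (le_max_of_le_left ha₀) (max_le ha₁ hb₁),
    volume_restrict_unitInterval_real_Ioi ha₀ ha₁, volume_restrict_unitInterval_real_Ioc hb₀ ha₁,
    measureReal_restrict_apply_univ, Real.volume_real_Icc_of_le zero_le_one]
  ring

end IIDUniform

section Levels

variable {τ : ℝ} {u : ℕ → ℝ}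

lemma tendsto_one_sub_div_natCast (hu : ∀ n : ℕ, u n = 1 - τ / n) :
    Tendsto u atTop (𝓝 1) := by
  simpa [funext hu] using tendsto_const_nhds.sub (tendsto_const_div_atTop_nhds_zero_nat τ)

lemma eventually_one_sub_div_natCast (hτ : 0 ≤ τ) (hu : ∀ n : ℕ, u n = 1 - τ / n) :
    ∀ᶠ n : ℕ in atTop, 0 ≤ u n ∧ u n ≤ 1 ∧ n * (1 - u n) = τ := by
  filter_upwards [eventually_ge_atTop 1, tendsto_natCast_atTop_atTop.eventually_ge_atTop τ]
    with n hn hτn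
  have hn₀ : (0 : ℝ) < n := by exact_mod_cast hn
  rw [hu]
  refine ⟨?_, ?_, ?_⟩
  · exact sub_nonneg.2 ((div_le_one hn₀).2 hτn)
  · linarith [div_nonneg hτ hn₀.le]
  · rw [sub_sub_cancel, mul_div_cancel₀ _ hn₀.ne']

end Levels

section Limits

variable {Ω : Type*} [MeasurableSpace Ω] {P : Measure Ω} {Y : ℤ → Ω → ℝ}
  (hYm : ∀ i, Measurable (Y i)) (hIndep : iIndepFun Y P)
  (hUnif : ∀ i, Measure.map (Y i) P = volume.restrict (Icc (0:ℝ) 1))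
  {τ₁ τ₂ : ℝ} (hτ₁ : 0 ≤ τ₁) (hτ₂ : 0 ≤ τ₂) {u₁ u₂ : ℕ → ℝ}
  (hu₁ : ∀ n : ℕ, u₁ n = 1 - τ₁ / n) (hu₂ : ∀ n : ℕ, u₂ n = 1 - τ₂ / n)
include hYm hIndep hUnif

include hτ₂ hu₂ in
lemma tendsto_natCast_mul_measureReal_upcrossing :
    Tendsto (fun n : ℕ => n * P.real (upcrossing Y (u₂ n))) atTop (𝓝 τ₂) := by
  have hlim : Tendsto (fun n => u₂ n * τ₂) atTop (𝓝 τ₂) := by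
    simpa using (tendsto_one_sub_div_natCast hu₂).mul_const τ₂
  refine hlim.congr' ?_
  filter_upwards [eventually_one_sub_div_natCast hτ₂ hu₂] with n ⟨h₀, h₁, hn⟩
  rw [measureReal_upcrossing hYm hIndep hUnif h₀ h₁, ← hn]
  ring

include hτ₁ hu₁ in
lemma tendsto_natCast_mul_measureReal_upcrossing_laggedMax [IsFiniteMeasure P] :
    Tendsto (fun n : ℕ => n * P.real (upcrossing (laggedMax Y) (u₁ n))) atTop (𝓝 (2 * τ₁)) := by
  have hu := tendsto_one_sub_div_natCast hu₁
  have hlim : Tendsto (fun n => u₁ n ^ 3 * (1 + u₁ n) * τ₁) atTop (𝓝 (2 * τ₁)) := by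
    convert ((hu.pow 3).mul (tendsto_const_nhds.add hu)).mul_const τ₁ using 2
    norm_num
  refine hlim.congr' ?_
  filter_upwards [eventually_one_sub_div_natCast hτ₁ hu₁] with n ⟨h₀, h₁, hn⟩
  rw [measureReal_upcrossing_laggedMax hYm hIndep hUnif h₀ h₁, ← hn]
  ring

include hτ₁ hτ₂ hu₁ hu₂ in
lemma tendsto_natCast_mul_measureReal_upcrossing_laggedMax_inter_upcrossing [IsFiniteMeasure P] :
    Tendsto (fun n : ℕ => n * P.real (upcrossing (laggedMax Y) (u₁ n) ∩ upcrossing Y (u₂ n)))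
      atTop (𝓝 (min τ₁ τ₂)) := by
  have hu := tendsto_one_sub_div_natCast hu₁
  have hv := tendsto_one_sub_div_natCast hu₂
  have hlim : Tendsto (fun n => u₁ n ^ 2 * min (u₁ n) (u₂ n) *
      (min τ₁ τ₂ + (1 - u₁ n) * max (τ₂ - τ₁) 0)) atTop (𝓝 (min τ₁ τ₂)) := by
    convert ((hu.pow 2).mul (hu.min hv)).mul (tendsto_const_nhds.add
      ((tendsto_const_nhds.sub hu).mul_const _)) using 2
    norm_num
  refine hlim.congr' ?_
  filter_upwards [eventually_one_sub_div_natCast hτ₁ hu₁, eventually_one_sub_div_natCast hτ₂ hu₂]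
    with n ⟨ha₀, ha₁, hna⟩ ⟨hb₀, hb₁, hnb⟩
  have hn : (0 : ℝ) ≤ n := n.cast_nonneg
  have hmax : n * (1 - max (u₁ n) (u₂ n)) = min τ₁ τ₂ := by
    rw [← min_sub_sub_left, mul_min_of_nonneg _ _ hn, hna, hnb]
  have hpos : n * max (u₁ n - u₂ n) 0 = max (τ₂ - τ₁) 0 := by
    rw [mul_max_of_nonneg _ _ hn, mul_zero, ← hna, ← hnb]
    congr 1
    ring
  rw [measureReal_upcrossing_laggedMax_inter_upcrossing hYm hIndep hUnif ha₀ ha₁ hb₀ hb₁,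
    ← hmax, ← hpos]
  ring

end Limits

theorem stmt14
    {Ω : Type*} [MeasurableSpace Ω] (P : Measure Ω) [IsProbabilityMeasure P]
    (Y : ℤ → Ω → ℝ) (hYm : ∀ i, Measurable (Y i))
    (hIndep : iIndepFun Y P)
    (hUnif : ∀ i, Measure.map (Y i) P = volume.restrict (Icc (0:ℝ) 1))
    (τ'₁ τ'₂ : ℝ) (hτ₁ : 0 < τ'₁) (hτ₂ : 0 < τ'₂)
    (Z₁ Z₂ : ℕ → Ω → ℝ)
    (hZ₁ : ∀ i : ℕ, Z₁ i = fun ω => max (Y i ω) (max (Y ((i:ℤ) - 2) ω) (Y ((i:ℤ) - 3) ω)))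
    (hZ₂ : ∀ i : ℕ, Z₂ i = fun ω => Y i ω)
    (u₁ u₂ : ℕ → ℝ) (hu₁ : ∀ n : ℕ, u₁ n = 1 - τ'₁ / n) (hu₂ : ∀ n : ℕ, u₂ n = 1 - τ'₂ / n)
    (A₁ A₂ : ℕ → Set Ω)
    (hA₁ : ∀ n, A₁ n = {ω | Z₁ 1 ω ≤ u₁ n ∧ u₁ n < Z₁ 2 ω})
    (hA₂ : ∀ n, A₂ n = {ω | Z₂ 1 ω ≤ u₂ n ∧ u₂ n < Z₂ 2 ω}) :
    Tendsto (fun n : ℕ => (n : ℝ) * (P (A₁ n ∩ (A₂ n)ᶜ)).toReal)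
        atTop (nhds (if τ'₁ ≤ τ'₂ then τ'₁ else 2 * τ'₁ - τ'₂))
    ∧ Tendsto (fun n : ℕ => (n : ℝ) * (P ((A₁ n)ᶜ ∩ A₂ n)).toReal)
        atTop (nhds (if τ'₁ ≤ τ'₂ then τ'₂ - τ'₁ else 0)) := by
  have hA₁' : ∀ n, A₁ n = upcrossing (laggedMax Y) (u₁ n) := fun n => by
    rw [hA₁, hZ₁, hZ₁]; rfl
  have hA₂' : ∀ n, A₂ n = upcrossing Y (u₂ n) := fun n => by
    rw [hA₂, hZ₂, hZ₂]; rfl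
  have h₁ := tendsto_natCast_mul_measureReal_upcrossing_laggedMax hYm hIndep hUnif hτ₁.le hu₁
  have h₂ := tendsto_natCast_mul_measureReal_upcrossing hYm hIndep hUnif hτ₂.le hu₂
  have h₁₂ := tendsto_natCast_mul_measureReal_upcrossing_laggedMax_inter_upcrossing
    hYm hIndep hUnif hτ₁.le hτ₂.le hu₁ hu₂
  constructor
  · convert h₁.sub h₁₂ using 2 with n
    · rw [← measureReal_def, hA₁', hA₂',
        measureReal_inter_compl_eq_sub (measurableSet_upcrossing hYm _), mul_sub]
    · split_ifs with h
      · rw [min_eq_left h]; ring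
      · rw [min_eq_right (le_of_not_ge h)]
  · convert h₂.sub h₁₂ using 2 with n
    · rw [← measureReal_def, hA₁', hA₂', inter_comm, measureReal_inter_compl_eq_sub
        (measurableSet_upcrossing (measurable_laggedMax hYm) _), inter_comm, mul_sub]
    · split_ifs with h
      · rw [min_eq_left h]
      · rw [min_eq_right (le_of_not_ge h), sub_self]
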